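/- arXiv:2208.05094 — 2 statements merged into one kernel-verified Lean document; each statement's English description precedes it below -/
import Mathlib

section
/- Let G(ζ) = 1 - ζ + ζ log ζ and let G₊⁻¹ : [0,∞) → [1,∞) be the inverse of G restricted to [1,∞). For any fixed z > 0, the function f₁(y) := y·G₊⁻¹(z/y) is strictly increasing on (0,∞) and f₁(y) → 0 as y → 0⁺. -/
/-- Let `G(ζ) = 1 - ζ + ζ log ζ` with right-branch inverse `G₊⁻¹ : [0,∞) → [1,∞)`.
For fixed `z > 0`, `f₁(y) = y·G₊⁻¹(z/y)` is strictly increasing on `(0,∞)` and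
`f₁(y) → 0` as `y → 0⁺`. -/
theorem stmt_4 (Ginv : ℝ → ℝ)
    (hGinv : ∀ ξ : ℝ, 0 ≤ ξ →
      1 ≤ Ginv ξ ∧ 1 - Ginv ξ + Ginv ξ * Real.log (Ginv ξ) = ξ)
    (z : ℝ) (hz : 0 < z) :
    StrictMonoOn (fun y : ℝ => y * Ginv (z / y)) (Set.Ioi 0) ∧
    Filter.Tendsto (fun y : ℝ => y * Ginv (z / y))
      (nhdsWithin 0 (Set.Ioi 0)) (nhds 0) := by
  have basic : ∀ y : ℝ, 0 < y → 1 < Ginv (z / y) ∧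
      1 - Ginv (z / y) + Ginv (z / y) * Real.log (Ginv (z / y)) = z / y := by
    intro y hy
    have hξ : 0 ≤ z / y := le_of_lt (div_pos hz hy)
    obtain ⟨h1, h2⟩ := hGinv (z / y) hξ
    refine ⟨lt_of_le_of_ne h1 ?_, h2⟩
    intro h
    rw [← h] at h2
    simp [Real.log_one] at h2
    exact absurd h2.symm (ne_of_gt (div_pos hz hy))
  constructor
  · intro a ha b hb hab
    simp only [Set.mem_Ioi] at ha hb
    set α := Ginv (z / a) with hα_def
    set β := Ginv (z / b) with hβ_def
    obtain ⟨hα1, hGa⟩ := basic a ha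
    obtain ⟨hβ1, hGb⟩ := basic b hb
    have hα0 : 0 < α := lt_trans one_pos hα1
    have hβ0 : 0 < β := lt_trans one_pos hβ1
    have hGab : 1 - β + β * Real.log β < 1 - α + α * Real.log α := by
      rw [hGa, hGb]
      exact div_lt_div_of_pos_left hz ha hab
    have hβα : β < α := by
      by_contra h
      push_neg at h
      rcases eq_or_lt_of_le h with h' | h'
      · rw [h'] at hGab; linarith
      · have hlog : Real.log (α / β) < α / β - 1 := by
          apply Real.log_lt_sub_one_of_pos (div_pos hα0 hβ0)
          exact ne_of_lt (by rw [div_lt_one hβ0]; exact h')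
        rw [Real.log_div (ne_of_gt hα0) (ne_of_gt hβ0)] at hlog
        have hlogα : 0 ≤ Real.log α := Real.log_nonneg hα1.le
        have h2 : β * (Real.log α - Real.log β) < α - β := by
          have h3 := mul_lt_mul_of_pos_left hlog hβ0
          have h4 : β * (α / β - 1) = α - β := by field_simp
          linarith [h3]
        nlinarith [mul_le_mul_of_nonneg_right (le_of_lt h') hlogα]
    have hlog : Real.log β - Real.log α ≤ β / α - 1 := by
      have := Real.log_le_sub_one_of_pos (div_pos hβ0 hα0)
      rwa [Real.log_div (ne_of_gt hβ0) (ne_of_gt hα0)] at this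
    have hkey : α - β ≤ α * (Real.log α - Real.log β) := by
      have h3 := mul_le_mul_of_nonneg_left hlog (le_of_lt hα0)
      have h4 : α * (β / α - 1) = β - α := by field_simp
      nlinarith [h3, h4]
    have hstr : α - β < α * β * (Real.log α - Real.log β) := by
      nlinarith [hkey, hβα, hβ1]
    have hαβG : α * (1 - β + β * Real.log β) < β * (1 - α + α * Real.log α) := by
      nlinarith [hstr]
    have hGβpos : 0 < 1 - β + β * Real.log β := by rw [hGb]; exact div_pos hz hb
    have hGαpos : 0 < 1 - α + α * Real.log α := by rw [hGa]; exact div_pos hz ha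
    have haG : a * (1 - α + α * Real.log α) = z := by
      rw [hGa]; field_simp
    have hbG : b * (1 - β + β * Real.log β) = z := by
      rw [hGb]; field_simp
    show a * α < b * β
    have hmul : a * α * ((1 - α + α * Real.log α) * (1 - β + β * Real.log β)) <
        b * β * ((1 - α + α * Real.log α) * (1 - β + β * Real.log β)) := by
      calc a * α * ((1 - α + α * Real.log α) * (1 - β + β * Real.log β))
          = z * (α * (1 - β + β * Real.log β)) := by rw [← haG]; ring
        _ < z * (β * (1 - α + α * Real.log α)) := by
            exact mul_lt_mul_of_pos_left hαβG hz
        _ = b * β * ((1 - α + α * Real.log α) * (1 - β + β * Real.log β)) := by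
            rw [← hbG]; ring
    exact lt_of_mul_lt_mul_right hmul (le_of_lt (mul_pos hGαpos hGβpos))
  · rw [Metric.tendsto_nhdsWithin_nhds]
    intro ε hε
    set M : ℝ := Real.exp (1 + 2 * z / ε) with hM_def
    have hM1 : 1 ≤ M := by
      rw [hM_def]
      calc (1:ℝ) = Real.exp 0 := (Real.exp_zero).symm
        _ ≤ Real.exp (1 + 2 * z / ε) := by
            apply Real.exp_le_exp.mpr; positivity
    have hM0 : 0 < M := lt_of_lt_of_le one_pos hM1
    refine ⟨z / M ^ 2, by positivity, ?_⟩
    intro y hy hyd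
    simp only [Set.mem_Ioi] at hy
    rw [Real.dist_eq, sub_zero, abs_of_pos hy] at hyd
    obtain ⟨hζ1, hGζ⟩ := basic y hy
    set ζ := Ginv (z / y) with hζ_def
    have hζ0 : 0 < ζ := lt_trans one_pos hζ1
    rw [Real.dist_eq, sub_zero, abs_of_pos (mul_pos hy hζ0)]
    have hyG : y * (1 - ζ + ζ * Real.log ζ) = z := by
      rw [hGζ]; field_simp
    -- ζ² ≥ z/y > M²
    have hlogζ : Real.log ζ ≤ ζ - 1 := Real.log_le_sub_one_of_pos hζ0
    have hζsq : M ^ 2 < ζ ^ 2 := by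
      have h1 : z / y ≤ ζ ^ 2 := by
        rw [← hGζ]
        nlinarith [hlogζ, hζ1]
      have h2 : M ^ 2 < z / y := by
        rw [lt_div_iff₀ hy]
        calc M ^ 2 * y < M ^ 2 * (z / M ^ 2) := by
              apply mul_lt_mul_of_pos_left hyd (by positivity)
          _ = z := by field_simp
      linarith
    have hMζ : M < ζ := by nlinarith
    have hlogMζ : 1 + 2 * z / ε < Real.log ζ := by
      have := Real.log_lt_log hM0 hMζ
      rwa [hM_def, Real.log_exp] at this
    -- y ζ (log ζ - 1) ≤ z
    have hbound : y * ζ * (Real.log ζ - 1) ≤ z := by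
      nlinarith [hyG, hy.le]
    have h2zε : 0 < 2 * z / ε := by positivity
    have hL : 2 * z / ε < Real.log ζ - 1 := by linarith
    have hL0 : 0 < Real.log ζ - 1 := lt_trans h2zε hL
    have hub : y * ζ ≤ z / (Real.log ζ - 1) := by
      rw [le_div_iff₀ hL0]; exact hbound
    have hub2 : z / (Real.log ζ - 1) < z / (2 * z / ε) :=
      div_lt_div_of_pos_left hz h2zε hL
    have heq : z / (2 * z / ε) = ε / 2 := by
      field_simp
    linarith
end

section
/- Let ψ(ζ) = ζ - 1 - log ζ with right branch inverse ψ₊⁻¹ : [0,∞) → [1,∞). For any fixed z > 0, the function f₂(y) := y·ψ₊⁻¹(z/y) - z is strictly increasing in y on (0,∞), and f₂(y) → 0 as y → 0⁺ (equivalently, y·ψ₊⁻¹(z/y) → z as y → 0⁺). -/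
/-!
Put `u = ψ₊⁻¹(z / y)`, so that `y · ψ(u) = z` and `y · u = z / (ψ(u) / u)`. As `y` grows, `u`
decreases because `ψ` is increasing on `[1, ∞)`, and so does `ψ(u) / u`; hence `y · u` increases.
For the limit, `log u = 2 log √u ≤ 2 (√u - 1)` gives `√u ≤ 1 + √ψ(u)`, and therefore
`0 ≤ y · u - z ≤ y + 2 √(y z)`.
-/

open Real Filter Set Topology

noncomputable def psi (ζ : ℝ) : ℝ := ζ - 1 - log ζ

lemma log_div_lt_sub {a b : ℝ} (ha : 0 < a) (hab : a < b) : log b - log a < (b - a) / a := by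
  have hba : b / a - 1 = (b - a) / a := by field_simp
  rw [← log_div (ha.trans hab).ne' ha.ne', ← hba]
  refine log_lt_sub_one_of_pos (div_pos (ha.trans hab) ha) ?_
  rw [Ne, div_eq_one_iff_eq ha.ne']
  exact hab.ne'

lemma psi_strictMonoOn : StrictMonoOn psi (Ici 1) := by
  intro a (ha : 1 ≤ a) b _ hab
  have hlog := log_div_lt_sub (by linarith) hab
  have : (b - a) / a ≤ b - a := div_le_self (by linarith) ha
  unfold psi
  linarith

lemma psi_div_self_strictMonoOn : StrictMonoOn (fun u => psi u / u) (Ici 1) := by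
  intro a (ha : 1 ≤ a) b _ hab
  have ha0 : 0 < a := by linarith
  have hlog : a * (log b - log a) < b - a := by
    have := log_div_lt_sub ha0 hab
    rwa [lt_div_iff₀ ha0, mul_comm] at this
  have : 0 ≤ (b - a) * log a := mul_nonneg (by linarith) (log_nonneg ha)
  rw [div_lt_div_iff₀ ha0 (by linarith)]
  unfold psi
  nlinarith

lemma sqrt_le_one_add_sqrt_psi {u : ℝ} (hu : 0 < u) : √u ≤ 1 + √(psi u) := by
  have hlog : log u ≤ 2 * (√u - 1) := by
    have := log_le_sub_one_of_pos (sqrt_pos.2 hu)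
    rw [log_sqrt hu.le] at this
    linarith
  have hsq : (√u - 1) ^ 2 ≤ psi u := by
    unfold psi
    nlinarith [sq_sqrt hu.le]
  have := sqrt_le_sqrt hsq
  rw [sqrt_sq_eq_abs] at this
  linarith [le_abs_self (√u - 1)]

section Level

variable {z : ℝ}

lemma mul_lt_mul_of_mul_psi_eq (hz : 0 < z) {y₁ y₂ u₁ u₂ : ℝ} (hy₁ : 0 < y₁) (hy : y₁ < y₂)
    (hu₁ : 1 ≤ u₁) (hu₂ : 1 ≤ u₂) (h₁ : y₁ * psi u₁ = z) (h₂ : y₂ * psi u₂ = z) :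
    y₁ * u₁ < y₂ * u₂ := by
  have hpsi₁ : 0 < psi u₁ := pos_of_mul_pos_right (h₁ ▸ hz) hy₁.le
  have hpsi₂ : 0 < psi u₂ := pos_of_mul_pos_right (h₂ ▸ hz) (hy₁.trans hy).le
  have hu : u₂ < u₁ := (psi_strictMonoOn.lt_iff_lt hu₂ hu₁).1 (by nlinarith)
  have hratio := psi_div_self_strictMonoOn hu₂ hu₁ hu
  have hmul : ∀ {y u}, 0 < u → 0 < psi u → y * psi u = z → y * u = z / (psi u / u) := by
    intro y u hu hpsi h
    rw [← h]
    field_simp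
  rw [hmul (by linarith) hpsi₁ h₁, hmul (by linarith) hpsi₂ h₂]
  exact div_lt_div_of_pos_left hz (div_pos hpsi₂ (by linarith)) hratio

lemma mul_sub_nonneg_of_mul_psi_eq {y u : ℝ} (hy : 0 ≤ y) (hu : 1 ≤ u) (h : y * psi u = z) :
    0 ≤ y * u - z := by
  have : y * u - z = y * (1 + log u) := by rw [← h, psi]; ring
  rw [this]
  exact mul_nonneg hy (by linarith [log_nonneg hu])

lemma mul_sub_le_of_mul_psi_eq {y u : ℝ} (hy : 0 ≤ y) (hu : 0 < u) (h : y * psi u = z) :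
    y * u - z ≤ y + 2 * √(y * z) := by
  have hpsi : 0 ≤ psi u := by unfold psi; linarith [log_le_sub_one_of_pos hu]
  have hsqrt : √(y * z) = y * √(psi u) := by
    rw [← h, ← mul_assoc, ← sq, sqrt_mul (sq_nonneg y), sqrt_sq hy]
  have hu_le : u ≤ (1 + √(psi u)) ^ 2 := by
    calc u = √u ^ 2 := (sq_sqrt hu.le).symm
      _ ≤ _ := pow_le_pow_left₀ (sqrt_nonneg u) (sqrt_le_one_add_sqrt_psi hu) 2
  calc y * u - z ≤ y * (1 + √(psi u)) ^ 2 - y * psi u := by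
        rw [h]; gcongr
    _ = y + 2 * √(y * z) := by rw [hsqrt, add_sq, sq_sqrt hpsi]; ring

end Level

/-- Let `ψ(ζ) = ζ - 1 - log ζ` with right-branch inverse `ψ₊⁻¹ : [0,∞) → [1,∞)`.
For fixed `z > 0`, `f₂(y) = y·ψ₊⁻¹(z/y) - z` is strictly increasing on `(0,∞)`
and `f₂(y) → 0` as `y → 0⁺`. -/
theorem stmt_5 (ψinv : ℝ → ℝ)
    (hψinv : ∀ ξ : ℝ, 0 ≤ ξ →
      1 ≤ ψinv ξ ∧ ψinv ξ - 1 - Real.log (ψinv ξ) = ξ)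
    (z : ℝ) (hz : 0 < z) :
    StrictMonoOn (fun y : ℝ => y * ψinv (z / y) - z) (Set.Ioi 0) ∧
    Filter.Tendsto (fun y : ℝ => y * ψinv (z / y) - z)
      (nhdsWithin 0 (Set.Ioi 0)) (nhds 0) := by
  have hlevel : ∀ y ∈ Ioi (0 : ℝ), 1 ≤ ψinv (z / y) ∧ y * psi (ψinv (z / y)) = z := by
    intro y (hy : 0 < y)
    obtain ⟨hge, heq⟩ := hψinv (z / y) (div_pos hz hy).le
    exact ⟨hge, by rw [psi, heq]; field_simp⟩
  refine ⟨fun y₁ hy₁ y₂ hy₂ hlt => ?_, ?_⟩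
  · have := mul_lt_mul_of_mul_psi_eq hz hy₁ hlt (hlevel y₁ hy₁).1 (hlevel y₂ hy₂).1
      (hlevel y₁ hy₁).2 (hlevel y₂ hy₂).2
    exact sub_lt_sub_right this z
  · have hbound : Tendsto (fun y : ℝ => y + 2 * √(y * z)) (𝓝[>] 0) (𝓝 0) := by
      have : Continuous fun y : ℝ => y + 2 * √(y * z) := by fun_prop
      simpa using (this.tendsto 0).mono_left nhdsWithin_le_nhds
    refine tendsto_of_tendsto_of_tendsto_of_le_of_le' tendsto_const_nhds hbound ?_ ?_ <;>
      filter_upwards [self_mem_nhdsWithin] with y hy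
    · exact mul_sub_nonneg_of_mul_psi_eq hy.le (hlevel y hy).1 (hlevel y hy).2
    · exact mul_sub_le_of_mul_psi_eq hy.le (by linarith [(hlevel y hy).1]) (hlevel y hy).2
end
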